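/- arXiv:1305.6998 — 3 statements merged into one kernel-verified Lean document; each statement's English description precedes it below -/
import Mathlib

section
/- If s > 0, 0 < t ≤ 1 and δ, δ' ≥ 0 with δ' ≥ δ, then 2^{-δ'-δ} · s^{(δ,δ')} · t^{δ'} ≤ (s·t)^{(δ,δ')} ≤ 2^{2δ'} · s^{(δ,δ')} · t^{δ}. -/
/-- The two-regime power: `a^{(μ,μ')} = a^μ` if `a ≤ 1` and `a^{μ'}` if `a ≥ 1`. -/
noncomputable def ppow (a μ μ' : ℝ) : ℝ := if a ≤ 1 then a ^ μ else a ^ μ'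

/-! For `0 < a` and `μ ≤ μ'` the two-regime power is the larger of `a ^ μ` and `a ^ μ'`. Writing
`(s t) ^ μ = s ^ μ t ^ μ`, the bounds follow from `t ^ μ' ≤ t ^ μ` for `t ≤ 1`, and the powers of
`2` only make them weaker. -/

lemma ppow_pos {a : ℝ} (ha : 0 < a) (μ μ' : ℝ) : 0 < ppow a μ μ' := by
  unfold ppow
  split_ifs <;> positivity

lemma ppow_eq_max {a μ μ' : ℝ} (ha : 0 < a) (hμ : μ ≤ μ') :
    ppow a μ μ' = max (a ^ μ) (a ^ μ') := by
  unfold ppow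
  split_ifs with h
  · exact (max_eq_left (Real.rpow_le_rpow_of_exponent_ge ha h hμ)).symm
  · exact (max_eq_right (Real.rpow_le_rpow_of_exponent_le (not_le.mp h).le hμ)).symm

lemma ppow_mul_eq_max {s t μ μ' : ℝ} (hs : 0 < s) (ht : 0 < t) (hμ : μ ≤ μ') :
    ppow (s * t) μ μ' = max (s ^ μ * t ^ μ) (s ^ μ' * t ^ μ') := by
  rw [ppow_eq_max (mul_pos hs ht) hμ, Real.mul_rpow hs.le ht.le, Real.mul_rpow hs.le ht.le]

lemma ppow_mul_le_ppow_mul_rpow {s t μ μ' : ℝ} (hs : 0 < s) (ht0 : 0 < t) (ht1 : t ≤ 1)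
    (hμ : μ ≤ μ') : ppow (s * t) μ μ' ≤ ppow s μ μ' * t ^ μ := by
  rw [ppow_mul_eq_max hs ht0 hμ, ppow_eq_max hs hμ, max_mul_of_nonneg _ _ (by positivity)]
  exact max_le_max le_rfl
    (mul_le_mul_of_nonneg_left (Real.rpow_le_rpow_of_exponent_ge ht0 ht1 hμ) (by positivity))

lemma ppow_mul_rpow_le_ppow_mul {s t μ μ' : ℝ} (hs : 0 < s) (ht0 : 0 < t) (ht1 : t ≤ 1)
    (hμ : μ ≤ μ') : ppow s μ μ' * t ^ μ' ≤ ppow (s * t) μ μ' := by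
  rw [ppow_mul_eq_max hs ht0 hμ, ppow_eq_max hs hμ, max_mul_of_nonneg _ _ (by positivity)]
  exact max_le_max (mul_le_mul_of_nonneg_left
    (Real.rpow_le_rpow_of_exponent_ge ht0 ht1 hμ) (by positivity)) le_rfl

theorem stmt2 (s t δ δ' : ℝ) (hs : 0 < s) (ht0 : 0 < t) (ht1 : t ≤ 1)
    (hδ : 0 ≤ δ) (hδ' : 0 ≤ δ') (hle : δ ≤ δ') :
    (2:ℝ) ^ (-δ' - δ) * ppow s δ δ' * t ^ δ' ≤ ppow (s * t) δ δ' ∧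
    ppow (s * t) δ δ' ≤ (2:ℝ) ^ (2 * δ') * ppow s δ δ' * t ^ δ := by
  have two_rpow_le_one : (2:ℝ) ^ (-δ' - δ) ≤ 1 :=
    Real.rpow_le_one_of_one_le_of_nonpos one_le_two (by linarith)
  have one_le_two_rpow : (1:ℝ) ≤ 2 ^ (2 * δ') := Real.one_le_rpow one_le_two (by positivity)
  have hppow := ppow_pos hs δ δ'
  constructor
  · calc (2:ℝ) ^ (-δ' - δ) * ppow s δ δ' * t ^ δ'
        = 2 ^ (-δ' - δ) * (ppow s δ δ' * t ^ δ') := mul_assoc _ _ _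
      _ ≤ ppow s δ δ' * t ^ δ' := mul_le_of_le_one_left (by positivity) two_rpow_le_one
      _ ≤ ppow (s * t) δ δ' := ppow_mul_rpow_le_ppow_mul hs ht0 ht1 hle
  · calc ppow (s * t) δ δ' ≤ ppow s δ δ' * t ^ δ := ppow_mul_le_ppow_mul_rpow hs ht0 ht1 hle
      _ ≤ 2 ^ (2 * δ') * (ppow s δ δ' * t ^ δ) :=
        le_mul_of_one_le_left (by positivity) one_le_two_rpow
      _ = 2 ^ (2 * δ') * ppow s δ δ' * t ^ δ := (mul_assoc _ _ _).symm
end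

section
/- Let δ ∈ [0, 1/2). Then for every ψ ∈ C¹(ℝ), ∫_{−1}^{1} |x|^{2δ} (ψ'(x))² dx ≥ ((1 − 2δ)/2) · ∫_{−1}^{1} (ψ(x) − ⟨ψ⟩)² dx, where ⟨ψ⟩ = (1/2) ∫_{−1}^{1} ψ. -/
/-!
For `x ∈ [-1, 1]`, the fundamental theorem of calculus and the Cauchy–Schwarz inequality with
weight `|t|^(2δ)` give `(ψ x - ψ 0)² ≤ (∫_{Ι 0 x} |t|^(-2δ) dt) · ∫_{-1}^{1} |t|^(2δ) ψ'²`,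
and the first factor is `|x|^(1-2δ) / (1 - 2δ) ≤ 1 / (1 - 2δ)`; `2δ < 1` is exactly what makes
`|t|^(-2δ)` integrable at the origin. Integrating over `[-1, 1]` and using that the mean `⟨ψ⟩`
minimises `c ↦ ∫ (ψ - c)²` gives the inequality.
-/

open MeasureTheory Set Real Interval

section

variable {α : Type*} [MeasurableSpace α] {μ : Measure α}

-- The discriminant of the nonnegative quadratic `s ↦ ∫ w⁻¹ (w f - s)²` is nonpositive.
theorem sq_integral_le_integral_mul_sq_mul_integral_inv {w f : α → ℝ}
    (hw : ∀ᵐ a ∂μ, 0 < w a) (hf : Integrable f μ) (hwf : Integrable (fun a => w a * f a ^ 2) μ)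
    (hw_inv : Integrable (fun a => (w a)⁻¹) μ) :
    (∫ a, f a ∂μ) ^ 2 ≤ (∫ a, w a * f a ^ 2 ∂μ) * ∫ a, (w a)⁻¹ ∂μ := by
  have hquad : ∀ s : ℝ, 0 ≤ (∫ a, (w a)⁻¹ ∂μ) * (s * s) + (-2 * ∫ a, f a ∂μ) * s
      + ∫ a, w a * f a ^ 2 ∂μ := fun s =>
    calc 0 ≤ ∫ a, (w a)⁻¹ * (w a * f a - s) ^ 2 ∂μ :=
          integral_nonneg_of_ae (hw.mono fun a ha => by positivity)
      _ = ∫ a, w a * f a ^ 2 + (-2 * s) * f a + s ^ 2 * (w a)⁻¹ ∂μ :=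
          integral_congr_ae (hw.mono fun a ha => by field_simp; ring)
      _ = _ := by
          rw [integral_add (by fun_prop) (hw_inv.const_mul _), integral_add hwf (hf.const_mul _),
            integral_const_mul, integral_const_mul]
          ring
  have := discrim_le_zero hquad
  rw [discrim] at this
  nlinarith

theorem integral_sub_average_sq_le [IsFiniteMeasure μ] {f : α → ℝ} (hf : MemLp f 2 μ) (c : ℝ) :
    ∫ a, (f a - ⨍ b, f b ∂μ) ^ 2 ∂μ ≤ ∫ a, (f a - c) ^ 2 ∂μ := by
  set m := ⨍ b, f b ∂μ
  have hsq : Integrable (fun a => (f a - m) ^ 2) μ := (hf.sub (memLp_const m)).integrable_sq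
  have hlin : Integrable (fun a => f a - m) μ :=
    (hf.integrable one_le_two).sub (integrable_const m)
  calc ∫ a, (f a - m) ^ 2 ∂μ
      ≤ ∫ a, (f a - m) ^ 2 ∂μ + μ.real univ * (m - c) ^ 2 := by
        have : 0 ≤ μ.real univ := measureReal_nonneg
        nlinarith [sq_nonneg (m - c)]
    _ = ∫ a, (f a - m) ^ 2 + 2 * (m - c) * (f a - m) + (m - c) ^ 2 ∂μ := by
        rw [integral_add (by fun_prop) (integrable_const _),
          integral_add hsq (hlin.const_mul _), integral_const_mul, integral_sub_average,
          integral_const, smul_eq_mul]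
        ring
    _ = ∫ a, (f a - c) ^ 2 ∂μ := by congr 1; ext a; ring

end

theorem intervalIntegral.integral_sub_mean_sq_le {f : ℝ → ℝ} (hf : Continuous f) {a b : ℝ}
    (hab : a ≤ b) (c : ℝ) :
    ∫ x in a..b, (f x - (b - a)⁻¹ * ∫ y in a..b, f y) ^ 2 ≤ ∫ x in a..b, (f x - c) ^ 2 := by
  have hL2 : MemLp f 2 (volume.restrict (Ioc a b)) :=
    (memLp_two_iff_integrable_sq hf.aestronglyMeasurable).2
      ((hf.pow 2).integrableOn_Icc.mono_set Ioc_subset_Icc_self)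
  have := integral_sub_average_sq_le hL2 c
  simpa [setAverage_eq, intervalIntegral.integral_of_le hab, hab] using this

section

variable {r : ℝ}

theorem intervalIntegrable_abs_rpow (hr : -1 < r) (a b : ℝ) :
    IntervalIntegrable (fun t => |t| ^ r) volume a b := by
  have hpos : ∀ c, 0 ≤ c → IntervalIntegrable (fun t => |t| ^ r) volume 0 c := fun c hc =>
    (intervalIntegral.intervalIntegrable_rpow' hr).congr fun t ht => by
      rw [uIoc_of_le hc] at ht
      simp [abs_of_pos ht.1]
  have hzero : ∀ c, IntervalIntegrable (fun t => |t| ^ r) volume 0 c := by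
    intro c
    rcases le_total 0 c with hc | hc
    · exact hpos c hc
    · rw [IntervalIntegrable.iff_comp_neg]
      simpa using hpos (-c) (neg_nonneg.2 hc)
  exact (hzero a).symm.trans (hzero b)

theorem integral_abs_rpow_of_nonneg (hr : -1 < r) {x : ℝ} (hx : 0 ≤ x) :
    ∫ t in (0 : ℝ)..x, |t| ^ r = x ^ (r + 1) / (r + 1) := by
  rw [intervalIntegral.integral_congr (g := fun t => t ^ r) fun t ht => by
      rw [uIcc_of_le hx] at ht
      simp only [abs_of_nonneg ht.1],
    integral_rpow (Or.inl hr), zero_rpow (by linarith), sub_zero]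

theorem integral_uIoc_abs_rpow (hr : -1 < r) (x : ℝ) :
    ∫ t in Ι 0 x, |t| ^ r = |x| ^ (r + 1) / (r + 1) := by
  rcases le_total 0 x with hx | hx
  · rw [uIoc_of_le hx, ← intervalIntegral.integral_of_le hx, integral_abs_rpow_of_nonneg hr hx,
      abs_of_nonneg hx]
  · rw [uIoc_of_ge hx, ← intervalIntegral.integral_of_le hx, abs_of_nonpos hx,
      ← integral_abs_rpow_of_nonneg hr (neg_nonneg.2 hx)]
    simpa using (intervalIntegral.integral_comp_neg (a := x) (b := 0) (fun t => |t| ^ r))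

theorem sq_sub_le_integral_abs_rpow_mul_deriv_sq_div (hr₀ : -1 < r) (hr₁ : r < 1) {ψ : ℝ → ℝ}
    (hψ : ContDiff ℝ 1 ψ) {x : ℝ} (hx : x ∈ Icc (-1 : ℝ) 1) :
    (ψ x - ψ 0) ^ 2 ≤ (∫ t in (-1 : ℝ)..1, |t| ^ r * deriv ψ t ^ 2) / (1 - r) := by
  have hD : Continuous (deriv ψ) := hψ.continuous_deriv le_rfl
  have hwD : ∀ a b, IntervalIntegrable (fun t => |t| ^ r * deriv ψ t ^ 2) volume a b := fun a b =>
    (intervalIntegrable_abs_rpow hr₀ a b).mul_continuousOn (hD.pow 2).continuousOn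
  have hftc : ∫ t in (0 : ℝ)..x, deriv ψ t = ψ x - ψ 0 :=
    intervalIntegral.integral_deriv_eq_sub (fun t _ => hψ.differentiable one_ne_zero t)
      (hD.intervalIntegrable 0 x)
  have hw_inv : (fun t : ℝ => (|t| ^ r)⁻¹) = fun t => |t| ^ (-r) := by
    ext t; rw [rpow_neg (abs_nonneg t)]
  have hcs := sq_integral_le_integral_mul_sq_mul_integral_inv (μ := volume.restrict (Ι 0 x))
    (ae_restrict_of_ae ((Measure.ae_ne volume 0).mono fun t ht => by positivity))
    (hD.intervalIntegrable 0 x).def' (hwD 0 x).def'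
    (by rw [hw_inv]; exact (intervalIntegrable_abs_rpow (by linarith) 0 x).def')
  have henergy : ∫ t in Ι 0 x, |t| ^ r * deriv ψ t ^ 2 ≤
      ∫ t in (-1 : ℝ)..1, |t| ^ r * deriv ψ t ^ 2 := by
    rw [intervalIntegral.integral_of_le (by norm_num), ← uIoc_of_le (by norm_num : (-1 : ℝ) ≤ 1)]
    refine setIntegral_mono_set (hwD (-1) 1).def' (ae_of_all _ fun t => by positivity)
      (uIoc_subset_uIoc_of_uIcc_subset_uIcc (uIcc_subset_uIcc ?_ ?_)).eventuallyLE
    · simp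
    · rwa [uIcc_of_le (by norm_num : (-1 : ℝ) ≤ 1)]
  have hinv : ∫ t in Ι 0 x, (|t| ^ r)⁻¹ ≤ 1 / (1 - r) := by
    rw [hw_inv, integral_uIoc_abs_rpow (by linarith), neg_add_eq_sub]
    gcongr
    exact rpow_le_one (abs_nonneg x) (abs_le.2 ⟨hx.1, hx.2⟩) (by linarith)
  calc (ψ x - ψ 0) ^ 2 = (∫ t in Ι 0 x, deriv ψ t) ^ 2 := by
        rw [← hftc, ← sq_abs, intervalIntegral.abs_integral_eq_abs_integral_uIoc, sq_abs]
    _ ≤ (∫ t in Ι 0 x, |t| ^ r * deriv ψ t ^ 2) * ∫ t in Ι 0 x, (|t| ^ r)⁻¹ := hcs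
    _ ≤ (∫ t in (-1 : ℝ)..1, |t| ^ r * deriv ψ t ^ 2) * (1 / (1 - r)) := by
        gcongr
        exact intervalIntegral.integral_nonneg (by norm_num) fun t _ => by positivity
    _ = _ := mul_one_div _ _

end

theorem stmt6 (δ : ℝ) (hδ0 : 0 ≤ δ) (hδ : δ < 1/2) (ψ : ℝ → ℝ) (hψ : ContDiff ℝ 1 ψ) :
    ∫ x in (-1 : ℝ)..1, |x| ^ (2 * δ) * (deriv ψ x) ^ 2 ≥
      ((1 - 2 * δ) / 2) *
        ∫ x in (-1 : ℝ)..1, (ψ x - (1/2) * ∫ y in (-1 : ℝ)..1, ψ y) ^ 2 := by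
  set A := ∫ x in (-1 : ℝ)..1, |x| ^ (2 * δ) * (deriv ψ x) ^ 2
  have hmean : ∫ x in (-1 : ℝ)..1, (ψ x - (1/2) * ∫ y in (-1 : ℝ)..1, ψ y) ^ 2 ≤
      ∫ x in (-1 : ℝ)..1, (ψ x - ψ 0) ^ 2 := by
    simpa [one_add_one_eq_two] using intervalIntegral.integral_sub_mean_sq_le hψ.continuous
      (by norm_num : (-1 : ℝ) ≤ 1) (ψ 0)
  have hpointwise : ∫ x in (-1 : ℝ)..1, (ψ x - ψ 0) ^ 2 ≤ ∫ _ in (-1 : ℝ)..1, A / (1 - 2 * δ) :=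
    intervalIntegral.integral_mono_on (by norm_num)
      (((hψ.continuous.sub continuous_const).pow 2).intervalIntegrable _ _) intervalIntegrable_const
      fun x hx => sq_sub_le_integral_abs_rpow_mul_deriv_sq_div (by linarith) (by linarith) hψ hx
  have hne : 1 - 2 * δ ≠ 0 := by linarith
  rw [ge_iff_le]
  calc ((1 - 2 * δ) / 2) * ∫ x in (-1 : ℝ)..1, (ψ x - (1/2) * ∫ y in (-1 : ℝ)..1, ψ y) ^ 2
      ≤ ((1 - 2 * δ) / 2) * ∫ _ in (-1 : ℝ)..1, A / (1 - 2 * δ) :=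
        mul_le_mul_of_nonneg_left (hmean.trans hpointwise) (by linarith)
    _ = A := by
        rw [intervalIntegral.integral_const, smul_eq_mul]
        field_simp
        ring
end

section
/- Let δ₁ ∈ [0,1). The Neumann realization of H = −d/dx (x^{2δ₁} d/dx) on L²(0,1), defined via the closure of the form ψ ↦ ∫_0^1 x^{2δ₁} (ψ'(x))² dx on C¹ functions, has zero as a simple eigenvalue: if ψ is in the form domain and ∫_0^1 x^{2δ₁}(ψ')² = 0 then ψ is constant on (0,1]. In particular there exists λ > 0 such that ∫_0^1 x^{2δ₁}(ψ'(x))² dx ≥ λ ∫_0^1 (ψ(x) − ⟨ψ⟩)² dx for all ψ ∈ C¹([0,1]), where ⟨ψ⟩ = ∫_0^1 ψ. -/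
/-!
Write `E(ψ) = ∫₀¹ x^{2δ} ψ'(x)² dx`. For `0 < x ≤ 1`, split `ψ' = t^{-δ} · (t^δ ψ')` in
`ψ 1 - ψ x = ∫ₓ¹ ψ'` and apply Cauchy–Schwarz: since `t^{-2δ} ≤ x^{-δ} t^{-δ}` on `[x, 1]`,
`(ψ x - ψ 1)² ≤ x^{-δ} E(ψ) / (1 - δ)`. So `E(ψ) = 0` forces `ψ = ψ 1` on `(0, 1]`, and, because
`x^{-δ}` is integrable on `(0, 1)` with integral `1/(1 - δ)`, integrating the bound gives
`∫₀¹ (ψ - ψ 1)² ≤ E(ψ) / (1 - δ)²`. The mean is the best constant approximation in `L²`, so the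
Poincaré inequality holds with `λ = (1 - δ)²`.
-/

open MeasureTheory Set intervalIntegral ProbabilityTheory

section Integral

variable {α : Type*} [MeasurableSpace α] {μ : Measure α} {f g : α → ℝ}

theorem sq_integral_mul_le_integral_sq_mul_integral_sq
    (hf : Integrable (fun a => f a ^ 2) μ) (hg : Integrable (fun a => g a ^ 2) μ)
    (hfg : Integrable (fun a => f a * g a) μ) :
    (∫ a, f a * g a ∂μ) ^ 2 ≤ (∫ a, f a ^ 2 ∂μ) * ∫ a, g a ^ 2 ∂μ := by
  have hquad : ∀ r : ℝ, 0 ≤ (∫ a, f a ^ 2 ∂μ) * (r * r) + (2 * ∫ a, f a * g a ∂μ) * r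
      + ∫ a, g a ^ 2 ∂μ := by
    intro r
    have hexpand : ∫ a, (r * f a + g a) ^ 2 ∂μ
        = (∫ a, f a ^ 2 ∂μ) * (r * r) + (2 * ∫ a, f a * g a ∂μ) * r + ∫ a, g a ^ 2 ∂μ := by
      have hsplit : (fun a => (r * f a + g a) ^ 2)
          = fun a => (f a ^ 2 * (r * r) + f a * g a * (2 * r)) + g a ^ 2 := by
        funext a; ring
      have hint : Integrable (fun a => f a ^ 2 * (r * r) + f a * g a * (2 * r)) μ :=
        (hf.mul_const _).add (hfg.mul_const _)
      rw [hsplit, integral_add hint hg,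
        integral_add (hf.mul_const _) (hfg.mul_const _), MeasureTheory.integral_mul_const,
        MeasureTheory.integral_mul_const]
      ring
    exact hexpand ▸ integral_nonneg fun a => sq_nonneg _
  have hdisc := discrim_le_zero hquad
  rw [discrim] at hdisc
  nlinarith

theorem integral_sq_sub_integral_le [IsProbabilityMeasure μ] (hf : AEMeasurable f μ) (c : ℝ) :
    ∫ a, (f a - ∫ b, f b ∂μ) ^ 2 ∂μ ≤ ∫ a, (f a - c) ^ 2 ∂μ := by
  rw [← variance_eq_integral hf, ← variance_sub_const hf.aestronglyMeasurable c]
  exact variance_le_expectation_sq (by fun_prop)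

end Integral

theorem integral_unitInterval_sq_sub_integral_le {f : ℝ → ℝ}
    (hf : AEMeasurable f (volume.restrict (Ioc 0 1))) (c : ℝ) :
    ∫ x in (0 : ℝ)..1, (f x - ∫ y in (0 : ℝ)..1, f y) ^ 2 ≤ ∫ x in (0 : ℝ)..1, (f x - c) ^ 2 := by
  have : IsProbabilityMeasure (volume.restrict (Ioc (0 : ℝ) 1)) := ⟨by simp⟩
  simp only [integral_of_le zero_le_one]
  exact integral_sq_sub_integral_le hf c

section WeightedEnergy

variable {δ : ℝ} {ψ : ℝ → ℝ}

theorem integral_sq_rpow_neg_le (hδ0 : 0 ≤ δ) (hδ1 : δ < 1) {x : ℝ} (hx0 : 0 < x) (hx1 : x ≤ 1) :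
    ∫ t in x..1, (t ^ (-δ)) ^ 2 ≤ x ^ (-δ) / (1 - δ) := by
  have hcont : ContinuousOn (fun t : ℝ => t ^ (-δ)) (uIcc x 1) :=
    continuousOn_id.rpow_const fun t ht =>
      Or.inl (hx0.trans_le (by rw [uIcc_of_le hx1] at ht; exact ht.1)).ne'
  have hprimitive_le : (1 - x ^ (-δ + 1)) / (-δ + 1) ≤ 1 / (1 - δ) := by
    rw [neg_add_eq_sub]
    exact div_le_div_of_nonneg_right (by linarith [Real.rpow_nonneg hx0.le (1 - δ)])
      (by linarith)
  calc ∫ t in x..1, (t ^ (-δ)) ^ 2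
      ≤ ∫ t in x..1, x ^ (-δ) * t ^ (-δ) := by
        refine integral_mono_on hx1 (hcont.pow 2).intervalIntegrable
          (continuousOn_const.mul hcont).intervalIntegrable fun t ht => ?_
        rw [sq]
        exact mul_le_mul_of_nonneg_right
          (Real.rpow_le_rpow_of_nonpos hx0 ht.1 (neg_nonpos.2 hδ0))
          (Real.rpow_nonneg (hx0.le.trans ht.1) _)
    _ = x ^ (-δ) * ((1 - x ^ (-δ + 1)) / (-δ + 1)) := by
        rw [intervalIntegral.integral_const_mul, integral_rpow (Or.inl (by linarith)), Real.one_rpow]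
    _ ≤ x ^ (-δ) * (1 / (1 - δ)) :=
        mul_le_mul_of_nonneg_left hprimitive_le (Real.rpow_nonneg hx0.le _)
    _ = x ^ (-δ) / (1 - δ) := mul_one_div _ _

theorem sq_sub_le_rpow_neg_mul_weighted_energy (hδ0 : 0 ≤ δ) (hδ1 : δ < 1)
    (hψ : ContDiff ℝ 1 ψ) {x : ℝ} (hx0 : 0 < x) (hx1 : x ≤ 1) :
    (ψ x - ψ 1) ^ 2
      ≤ x ^ (-δ) / (1 - δ) * ∫ t in (0 : ℝ)..1, t ^ (2 * δ) * deriv ψ t ^ 2 := by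
  have hpos : ∀ t ∈ uIcc x 1, 0 < t := fun t ht =>
    hx0.trans_le (by rw [uIcc_of_le hx1] at ht; exact ht.1)
  have hderiv : Continuous (deriv ψ) := hψ.continuous_deriv le_rfl
  have hf : ContinuousOn (fun t : ℝ => t ^ (-δ)) (uIcc x 1) :=
    continuousOn_id.rpow_const fun t ht => Or.inl (hpos t ht).ne'
  have hg : ContinuousOn (fun t : ℝ => t ^ δ * deriv ψ t) (uIcc x 1) :=
    (continuousOn_id.rpow_const fun t ht => Or.inl (hpos t ht).ne').mul hderiv.continuousOn
  have hftc : ∫ t in x..1, t ^ (-δ) * (t ^ δ * deriv ψ t) = ψ 1 - ψ x := by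
    rw [integral_congr fun t ht => show t ^ (-δ) * (t ^ δ * deriv ψ t) = deriv ψ t by
      rw [← mul_assoc, ← Real.rpow_add (hpos t ht), neg_add_cancel, Real.rpow_zero, one_mul]]
    exact integral_deriv_eq_sub (fun t _ => (hψ.differentiable one_ne_zero).differentiableAt)
      (hderiv.intervalIntegrable _ _)
  have hcs : (∫ t in x..1, t ^ (-δ) * (t ^ δ * deriv ψ t)) ^ 2
      ≤ (∫ t in x..1, (t ^ (-δ)) ^ 2) * ∫ t in x..1, (t ^ δ * deriv ψ t) ^ 2 := by
    simp only [integral_of_le hx1]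
    exact sq_integral_mul_le_integral_sq_mul_integral_sq (hf.pow 2).intervalIntegrable.1
      (hg.pow 2).intervalIntegrable.1 (hf.mul hg).intervalIntegrable.1
  have henergy : ∫ t in x..1, (t ^ δ * deriv ψ t) ^ 2
      ≤ ∫ t in (0 : ℝ)..1, t ^ (2 * δ) * deriv ψ t ^ 2 := by
    rw [integral_congr fun t ht => show (t ^ δ * deriv ψ t) ^ 2 = t ^ (2 * δ) * deriv ψ t ^ 2 by
      rw [mul_pow, ← Real.rpow_natCast, ← Real.rpow_mul (hpos t ht).le]; ring_nf]
    refine integral_mono_interval hx0.le hx1 le_rfl ?_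
      (((Real.continuous_rpow_const (by linarith)).mul (hderiv.pow 2)).intervalIntegrable 0 1)
    filter_upwards [ae_restrict_mem measurableSet_Ioc] with t ht
    exact mul_nonneg (Real.rpow_nonneg ht.1.le _) (sq_nonneg _)
  calc (ψ x - ψ 1) ^ 2 = (∫ t in x..1, t ^ (-δ) * (t ^ δ * deriv ψ t)) ^ 2 := by
        rw [hftc]; ring
    _ ≤ (∫ t in x..1, (t ^ (-δ)) ^ 2) * ∫ t in x..1, (t ^ δ * deriv ψ t) ^ 2 := hcs
    _ ≤ x ^ (-δ) / (1 - δ) * ∫ t in (0 : ℝ)..1, t ^ (2 * δ) * deriv ψ t ^ 2 :=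
        mul_le_mul (integral_sq_rpow_neg_le hδ0 hδ1 hx0 hx1) henergy
          (integral_nonneg hx1 fun t _ => sq_nonneg _)
          (div_nonneg (Real.rpow_nonneg hx0.le _) (by linarith))

theorem integral_sq_sub_right_le_weighted_energy (hδ0 : 0 ≤ δ) (hδ1 : δ < 1)
    (hψ : ContDiff ℝ 1 ψ) :
    ∫ x in (0 : ℝ)..1, (ψ x - ψ 1) ^ 2
      ≤ (∫ t in (0 : ℝ)..1, t ^ (2 * δ) * deriv ψ t ^ 2) / (1 - δ) ^ 2 := by
  set E := ∫ t in (0 : ℝ)..1, t ^ (2 * δ) * deriv ψ t ^ 2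
  calc ∫ x in (0 : ℝ)..1, (ψ x - ψ 1) ^ 2
      ≤ ∫ x in (0 : ℝ)..1, x ^ (-δ) * (E / (1 - δ)) :=
        integral_mono_on_of_le_Ioo zero_le_one
          (((hψ.continuous.sub continuous_const).pow 2).intervalIntegrable 0 1)
          ((intervalIntegrable_rpow' (by linarith)).mul_const _) fun x hx =>
            (sq_sub_le_rpow_neg_mul_weighted_energy hδ0 hδ1 hψ hx.1 hx.2.le).trans_eq
              (by ring)
    _ = E / (1 - δ) ^ 2 := by
        rw [intervalIntegral.integral_mul_const, integral_rpow (Or.inl (by linarith)), Real.one_rpow,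
          Real.zero_rpow (by linarith), neg_add_eq_sub, sub_zero, one_div,
          ← div_eq_inv_mul]
        field_simp

end WeightedEnergy

theorem stmt16 (δ₁ : ℝ) (hδ₁0 : 0 ≤ δ₁) (hδ₁1 : δ₁ < 1) :
    (∀ ψ : ℝ → ℝ, ContDiff ℝ 1 ψ →
      (∫ x in (0 : ℝ)..1, x ^ (2 * δ₁) * (deriv ψ x) ^ 2) = 0 →
      ∀ x ∈ Set.Ioc (0 : ℝ) 1, ∀ y ∈ Set.Ioc (0 : ℝ) 1, ψ x = ψ y) ∧
    ∃ lam > (0 : ℝ), ∀ ψ : ℝ → ℝ, ContDiff ℝ 1 ψ →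
      ∫ x in (0 : ℝ)..1, x ^ (2 * δ₁) * (deriv ψ x) ^ 2 ≥
        lam * ∫ x in (0 : ℝ)..1, (ψ x - ∫ y in (0 : ℝ)..1, ψ y) ^ 2 := by
  refine ⟨fun ψ hψ hE x hx y hy => ?_, (1 - δ₁) ^ 2, pow_pos (sub_pos.2 hδ₁1) 2, fun ψ hψ => ?_⟩
  · have hconst : ∀ z ∈ Ioc (0 : ℝ) 1, ψ z = ψ 1 := fun z hz => by
      have hbound := sq_sub_le_rpow_neg_mul_weighted_energy hδ₁0 hδ₁1 hψ hz.1 hz.2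
      rw [hE, mul_zero] at hbound
      exact sub_eq_zero.1 (pow_eq_zero_iff two_ne_zero |>.1 (le_antisymm hbound (sq_nonneg _)))
    rw [hconst x hx, hconst y hy]
  · have hgap : 0 < (1 - δ₁) ^ 2 := pow_pos (sub_pos.2 hδ₁1) 2
    calc (1 - δ₁) ^ 2 * ∫ x in (0 : ℝ)..1, (ψ x - ∫ y in (0 : ℝ)..1, ψ y) ^ 2
        ≤ (1 - δ₁) ^ 2 * ∫ x in (0 : ℝ)..1, (ψ x - ψ 1) ^ 2 := by
          gcongr
          exact integral_unitInterval_sq_sub_integral_le hψ.continuous.aemeasurable _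
      _ ≤ (1 - δ₁) ^ 2 * ((∫ x in (0 : ℝ)..1, x ^ (2 * δ₁) * deriv ψ x ^ 2) / (1 - δ₁) ^ 2) := by
          gcongr
          exact integral_sq_sub_right_le_weighted_energy hδ₁0 hδ₁1 hψ
      _ = ∫ x in (0 : ℝ)..1, x ^ (2 * δ₁) * deriv ψ x ^ 2 := mul_div_cancel₀ _ hgap.ne'
end
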